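/- arXiv:2110.15935 — 2 statements merged into one kernel-verified Lean document; each statement's English description precedes it below -/
import Mathlib

section
/- For every n ∈ ℕ, the TE-CUSUM statistic satisfies G n = max over all pairs (ν, N) with 0 ≤ ν ≤ N ≤ n of the partial sum ∑_{k=ν+1}^{N} s k (the empty sum for ν = N being 0); that is, the recursion G (n+1) = max(G n, W (n+1)), G 0 = 0, computes the generalized log-likelihood-ratio statistic of the temporary-change hypothesis test in which the change starts at ν+1 and ends at N. -/
private lemma my_sup'_add {α : Type*} (t : Finset α) (ht : t.Nonempty) (f : α → ℝ) (c : ℝ) :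
    t.sup' ht f + c = t.sup' ht (fun a => f a + c) := by
  apply le_antisymm
  · have : t.sup' ht f ≤ t.sup' ht (fun a => f a + c) - c := by
      apply Finset.sup'_le
      intro a ha
      have := Finset.le_sup' (fun a => f a + c) ha
      linarith
    linarith
  · apply Finset.sup'_le
    intro a ha
    have := Finset.le_sup' f ha
    linarith

/-- The TE-CUSUM recursion `G 0 = 0`, `G (n+1) = max (G n) (W (n+1))`
(with `W` the CUSUM statistic) computes the generalized
log-likelihood-ratio statistic of the temporary-change hypothesis test:
`G n = max over pairs (ν, N) with 0 ≤ ν ≤ N ≤ n of ∑_{k=ν+1}^{N} s k`. -/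
theorem te_cusum_eq_glrt (s W G : ℕ → ℝ)
    (hW0 : W 0 = 0)
    (hW : ∀ n : ℕ, W (n + 1) = max 0 (W n) + s (n + 1))
    (hG0 : G 0 = 0)
    (hG : ∀ n : ℕ, G (n + 1) = max (G n) (W (n + 1))) :
    ∀ n : ℕ,
      G n = ((Finset.Iic n ×ˢ Finset.Iic n).filter (fun p => p.1 ≤ p.2)).sup'
              (⟨(0, 0), by simp⟩)
              (fun p => ∑ k ∈ Finset.Ioc p.1 p.2, s k) := by
  have hIic : ∀ n : ℕ, Finset.Iic (n + 1) = insert (n + 1) (Finset.Iic n) := by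
    intro n; ext x; simp [Finset.mem_Iic]; omega
  -- CUSUM lemma
  have hWmax : ∀ n : ℕ, max 0 (W n) =
      (Finset.Iic n).sup' Finset.nonempty_Iic (fun ν => ∑ k ∈ Finset.Ioc ν n, s k) := by
    intro n
    induction n with
    | zero => simp [hW0]
    | succ n ih =>
      rw [hW n, ih, my_sup'_add]
      have hstep : ∀ ν ∈ Finset.Iic n,
          (∑ k ∈ Finset.Ioc ν n, s k) + s (n + 1) = ∑ k ∈ Finset.Ioc ν (n + 1), s k := by
        intro ν hν
        rw [Finset.mem_Iic] at hν
        exact (Finset.sum_Ioc_succ_top hν s).symm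
      rw [Finset.sup'_congr Finset.nonempty_Iic rfl hstep]
      simp only [hIic n, Finset.sup'_insert]
      simp [max_comm]
  have hWsup : ∀ n : ℕ, W (n + 1) =
      (Finset.Iic n).sup' Finset.nonempty_Iic (fun ν => ∑ k ∈ Finset.Ioc ν (n + 1), s k) := by
    intro n
    rw [hW n, hWmax n, my_sup'_add]
    apply Finset.sup'_congr Finset.nonempty_Iic rfl
    intro ν hν
    rw [Finset.mem_Iic] at hν
    exact (Finset.sum_Ioc_succ_top hν s).symm
  intro n
  induction n with
  | zero =>
    have h0 : (Finset.Iic 0 ×ˢ Finset.Iic 0).filter (fun p => p.1 ≤ p.2)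
        = {((0 : ℕ), (0 : ℕ))} := by decide
    simp only [hG0, h0, Finset.sup'_singleton]
    simp
  | succ n ih =>
    have hsplit : ((Finset.Iic (n+1) ×ˢ Finset.Iic (n+1)).filter (fun p => p.1 ≤ p.2)) =
        ((Finset.Iic n ×ˢ Finset.Iic n).filter (fun p => p.1 ≤ p.2)) ∪
          (Finset.Iic (n+1)).image (fun ν => (ν, n+1)) := by
      ext ⟨a, b⟩
      simp only [Finset.mem_filter, Finset.mem_product, Finset.mem_Iic, Finset.mem_union,
        Finset.mem_image]
      constructor
      · rintro ⟨⟨ha, hb⟩, hab⟩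
        rcases Nat.lt_or_ge b (n+1) with h | h
        · exact Or.inl ⟨⟨by omega, by omega⟩, hab⟩
        · exact Or.inr ⟨a, by omega, by simp; omega⟩
      · rintro (⟨⟨ha, hb⟩, hab⟩ | ⟨ν, hν, h⟩)
        · exact ⟨⟨by omega, by omega⟩, hab⟩
        · obtain ⟨rfl, rfl⟩ : ν = a ∧ n + 1 = b := by
            constructor <;> [exact congrArg Prod.fst h; exact congrArg Prod.snd h]
          exact ⟨⟨hν, le_refl _⟩, by omega⟩
    have hPne : (((Finset.Iic n ×ˢ Finset.Iic n).filter (fun p => p.1 ≤ p.2))).Nonempty :=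
      ⟨(0, 0), by simp⟩
    have himne : ((Finset.Iic (n+1)).image (fun ν => (ν, n+1))).Nonempty :=
      ⟨(0, n+1), by simp⟩
    have himage : ((Finset.Iic (n+1)).image (fun ν => (ν, n+1))).sup' himne
        (fun p => ∑ k ∈ Finset.Ioc p.1 p.2, s k) = max 0 (W (n + 1)) := by
      rw [Finset.sup'_image]
      simp only [hIic n]
      rw [Finset.sup'_insert (H := Finset.nonempty_Iic)]
      simp only [Function.comp]
      rw [← hWsup n]
      simp
    have hGnn : (0 : ℝ) ≤ ((Finset.Iic n ×ˢ Finset.Iic n).filter (fun p => p.1 ≤ p.2)).sup'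
        hPne (fun p => ∑ k ∈ Finset.Ioc p.1 p.2, s k) := by
      have hmem : ((n : ℕ), (n : ℕ)) ∈ (Finset.Iic n ×ˢ Finset.Iic n).filter
          (fun p => p.1 ≤ p.2) := by simp
      have := Finset.le_sup' (fun p : ℕ × ℕ => ∑ k ∈ Finset.Ioc p.1 p.2, s k) hmem
      refine le_trans (le_of_eq ?_) this
      simp
    rw [hG n, ih]
    simp only [hsplit, Finset.sup'_union hPne himne]
    rw [himage, ← sup_assoc, sup_eq_left.mpr hGnn]
end

section
/- For every n ∈ ℕ, the Sum-TE-CUSUM statistic satisfies T_STEC(n) = (1/L) ∑_{l=1}^{L} [ max over all pairs (ν, N) with 0 ≤ ν ≤ N ≤ n of ∑_{k=ν+1}^{N} s l k ] = (1/L) ∑_{l=1}^{L} G l n; that is, the average of the recursively computed per-stream TE-CUSUM statistics equals the per-stream-maximized generalized log-likelihood-ratio statistic allowing each data stream l to have its own change interval (ν_l, N_l], without testing the combinations explicitly. -/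
private lemma Iic_succ' (n : ℕ) : Finset.Iic (n+1) = insert (n+1) (Finset.Iic n) := by
  ext x; simp; omega

private lemma M_eq (s W : ℕ → ℝ) (hW0 : W 0 = 0)
    (hW : ∀ n : ℕ, W (n + 1) = max 0 (W n) + s (n + 1)) :
    ∀ n : ℕ, max 0 (W n) = (Finset.Iic n).sup' Finset.nonempty_Iic
      (fun ν => ∑ k ∈ Finset.Ioc ν n, s k) := by
  intro n
  induction n with
  | zero => simp [hW0]
  | succ n ih =>
    have hIic : (Finset.Iic (n+1)).sup' Finset.nonempty_Iic
        (fun ν => ∑ k ∈ Finset.Ioc ν (n+1), s k)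
        = (insert (n+1) (Finset.Iic n)).sup'
          ((Iic_succ' n) ▸ Finset.nonempty_Iic)
          (fun ν => ∑ k ∈ Finset.Ioc ν (n+1), s k) :=
      Finset.sup'_congr _ (Iic_succ' n) (fun _ _ => rfl)
    rw [hW n, hIic, Finset.sup'_insert Finset.nonempty_Iic]
    have h1 : ((Finset.Iic n).sup' Finset.nonempty_Iic
        (fun ν => ∑ k ∈ Finset.Ioc ν n, s k)) + s (n+1)
        = (Finset.Iic n).sup' Finset.nonempty_Iic
        (fun ν => ∑ k ∈ Finset.Ioc ν (n+1), s k) := by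
      rw [Finset.sup'_add]
      refine Finset.sup'_congr _ rfl (fun ν hν => ?_)
      rw [Finset.sum_Ioc_succ_top (Finset.mem_Iic.mp hν)]
    rw [ih, h1]
    simp only [Finset.Ioc_self, Finset.sum_empty]



private lemma pair_step (n : ℕ) :
    ((Finset.Iic (n+1) ×ˢ Finset.Iic (n+1)).filter (fun p : ℕ × ℕ => p.1 ≤ p.2))
    = ((Finset.Iic n ×ˢ Finset.Iic n).filter (fun p : ℕ × ℕ => p.1 ≤ p.2))
      ∪ (Finset.Iic (n+1)).image (fun ν => (ν, n+1)) := by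
  ext p
  simp [Finset.mem_filter, Finset.mem_product, Finset.mem_image, Prod.ext_iff]
  constructor
  · rintro ⟨⟨h1, h2⟩, h3⟩
    rcases Nat.lt_or_ge p.2 (n+1) with h | h
    · exact Or.inl ⟨⟨by omega, by omega⟩, h3⟩
    · exact Or.inr ⟨by omega, by omega⟩
  · rintro (⟨⟨h1, h2⟩, h3⟩ | ⟨h1, h2⟩) <;> constructor <;> omega

private lemma G_eq (s W G : ℕ → ℝ) (hW0 : W 0 = 0)
    (hW : ∀ n : ℕ, W (n + 1) = max 0 (W n) + s (n + 1))
    (hG0 : G 0 = 0)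
    (hG : ∀ n : ℕ, G (n + 1) = max (G n) (W (n + 1))) :
    ∀ n : ℕ, G n =
      ((Finset.Iic n ×ˢ Finset.Iic n).filter (fun p : ℕ × ℕ => p.1 ≤ p.2)).sup'
        (⟨(0, 0), by simp⟩)
        (fun p => ∑ k ∈ Finset.Ioc p.1 p.2, s k) := by
  intro n
  induction n with
  | zero =>
    rw [hG0]
    have : ((Finset.Iic 0 ×ˢ Finset.Iic 0).filter (fun p : ℕ × ℕ => p.1 ≤ p.2))
        = {((0:ℕ), (0:ℕ))} := by decide
    refine Eq.trans ?_ (Finset.sup'_congr _ this (fun _ _ => rfl)).symm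
    simp
  | succ n ih =>
    have hGnn : (0:ℝ) ≤ G n := by
      rw [ih]
      have hm : ((n, n) : ℕ × ℕ) ∈
          ((Finset.Iic n ×ˢ Finset.Iic n).filter (fun p : ℕ × ℕ => p.1 ≤ p.2)) := by
        simp
      have := Finset.le_sup' (fun p : ℕ × ℕ => ∑ k ∈ Finset.Ioc p.1 p.2, s k) hm
      simpa using this
    have himg : ((Finset.Iic (n+1)).image (fun ν => (ν, n+1))).sup'
        (by exact ⟨(0, n+1), Finset.mem_image.mpr ⟨0, by simp⟩⟩)
        (fun p : ℕ × ℕ => ∑ k ∈ Finset.Ioc p.1 p.2, s k)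
        = max 0 (W (n+1)) := by
      rw [← Finset.sup'_comp_eq_image Finset.nonempty_Iic, M_eq s W hW0 hW]
      rfl
    rw [hG n]
    refine Eq.trans ?_ (Finset.sup'_congr _ (pair_step n) (fun _ _ => rfl)).symm
    rw [Finset.sup'_union (⟨(0,0), by simp⟩) (⟨(0, n+1), Finset.mem_image.mpr ⟨0, by simp⟩⟩),
      himg, ← ih]
    rw [show (G n ⊔ max 0 (W (n+1))) = max (max (G n) 0) (W (n+1)) from (max_assoc _ _ _).symm,
      max_eq_left hGnn]

/-- The Sum-TE-CUSUM global statistic `T_STEC n = (1/L) ∑_l G l n`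
(average of the recursively computed per-stream TE-CUSUM statistics)
equals the per-stream-maximized generalized log-likelihood-ratio
statistic in which each stream `l` has its own change interval
`(ν_l, N_l]` with `0 ≤ ν_l ≤ N_l ≤ n`. -/
theorem sum_te_cusum_eq_glrt (L : ℕ) (hL : 1 ≤ L)
    (s W G : Fin L → ℕ → ℝ) (T : ℕ → ℝ)
    (hW0 : ∀ l, W l 0 = 0)
    (hW : ∀ l, ∀ n : ℕ, W l (n + 1) = max 0 (W l n) + s l (n + 1))
    (hG0 : ∀ l, G l 0 = 0)
    (hG : ∀ l, ∀ n : ℕ, G l (n + 1) = max (G l n) (W l (n + 1)))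
    (hT : ∀ n : ℕ, T n = (1 / (L : ℝ)) * ∑ l, G l n) :
    ∀ n : ℕ,
      T n = (1 / (L : ℝ)) * ∑ l,
        ((Finset.Iic n ×ˢ Finset.Iic n).filter (fun p => p.1 ≤ p.2)).sup'
          (⟨(0, 0), by simp⟩)
          (fun p => ∑ k ∈ Finset.Ioc p.1 p.2, s l k) ∧
      T n = (1 / (L : ℝ)) * ∑ l, G l n := by
  intro n
  refine ⟨?_, hT n⟩
  rw [hT n]
  congr 1
  exact Finset.sum_congr rfl fun l _ =>
    G_eq (s l) (W l) (G l) (hW0 l) (hW l) (hG0 l) (hG l) n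
end
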